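/- Let G be a passable composite game over a poset A, let a ∈ A be an atom, and assume every left option G^L of G satisfies G^L ≤ [a]. Then G ≤ [a]. -/
import Mathlib


inductive Game (A : Type) : Type 1 where
  | atom : A → Game A
  | comp : (ι κ : Type) → (ι → Game A) → (κ → Game A) → Nonempty ι → Nonempty κ → Game A

namespace Game

variable {A : Type}

/-- `G.IsAtom` holds iff `G` is an atomic game. -/
def IsAtom : Game A → Prop
  | atom _ => True
  | comp _ _ _ _ _ _ => False

/-- `G.IsLeftOption x`: `x` is a left option of `G`. -/
def IsLeftOption : Game A → Game A → Prop
  | atom _, _ => False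
  | comp _ _ L _ _ _, x => ∃ i, L i = x

/-- `G.IsRightOption y`: `y` is a right option of `G`. -/
def IsRightOption : Game A → Game A → Prop
  | atom _, _ => False
  | comp _ _ _ R _ _, x => ∃ j, R j = x

section Ord

variable [PartialOrder A]

mutual
  /-- The order relation `G ≤ H` on games over a poset. -/
  inductive Le : Game A → Game A → Prop
    | mk : ∀ {G H : Game A},
        (∀ x, G.IsLeftOption x → Tri x H) →
        (∀ y, H.IsRightOption y → Tri G y) →
        ((G.IsAtom ∨ H.IsAtom) → Tri G H) →
        Le G H
  /-- The relation `G ◁ H` on games over a poset. -/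
  inductive Tri : Game A → Game A → Prop
    | ofRight : ∀ {G H y : Game A}, G.IsRightOption y → Le y H → Tri G H
    | ofLeft : ∀ {G H x : Game A}, H.IsLeftOption x → Le G x → Tri G H
    | ofAtom : ∀ {a b : A}, a ≤ b → Tri (Game.atom a) (Game.atom b)
end

/-- Equivalence of games: `G ≤ H` and `H ≤ G`. -/
def Equiv (G H : Game A) : Prop := Le G H ∧ Le H G

/-- A game is monotone if all of its options are good, and recursively all
options are monotone. -/
inductive Monotone : Game A → Prop
  | mk : ∀ {G : Game A},
      (∀ x, G.IsLeftOption x → Le G x) →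
      (∀ y, G.IsRightOption y → Le y G) →
      (∀ x, G.IsLeftOption x → Monotone x) →
      (∀ y, G.IsRightOption y → Monotone y) →
      Monotone G

/-- A game is passable if `G ◁ G` and recursively all options are passable. -/
inductive Passable : Game A → Prop
  | mk : ∀ {G : Game A}, Tri G G →
      (∀ x, G.IsLeftOption x → Passable x) →
      (∀ y, G.IsRightOption y → Passable y) →
      Passable G

end Ord

end Game

namespace Game

variable {A : Type}

/-- `x` is an option (left or right) of `G`. -/
def IsOption (G x : Game A) : Prop := G.IsLeftOption x ∨ G.IsRightOption x

theorem acc_isOption : ∀ G : Game A, Acc (fun x G : Game A => IsOption G x) G := by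
  intro G
  induction G with
  | atom b =>
      constructor
      intro y hy
      rcases hy with h | h <;> exact h.elim
  | comp ι κ L R hι hκ ihL ihR =>
      constructor
      intro y hy
      rcases hy with ⟨i, hi⟩ | ⟨j, hj⟩
      · exact hi ▸ ihL i
      · exact hj ▸ ihR j

theorem isOption_wf : WellFounded (fun x G : Game A => IsOption G x) :=
  ⟨acc_isOption⟩

/-- Recursion on the option relation. -/
theorem optRec {C : Game A → Prop}
    (ih : ∀ G, (∀ x, IsOption G x → C x) → C G) : ∀ G, C G :=
  fun G => isOption_wf.induction G ih

/-- Recursion on the transitive closure of the option relation. -/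
theorem optRecT {C : Game A → Prop}
    (ih : ∀ G, (∀ x, Relation.TransGen (fun x G : Game A => IsOption G x) x G → C x) → C G) :
    ∀ G, C G :=
  fun G => isOption_wf.transGen.induction G ih

section Ord

variable [PartialOrder A]

theorem le_left' {G H : Game A} (h : Le G H) : ∀ x, G.IsLeftOption x → Tri x H := by
  cases h with | mk h1 h2 h3 => exact h1

theorem le_right' {G H : Game A} (h : Le G H) : ∀ y, H.IsRightOption y → Tri G y := by
  cases h with | mk h1 h2 h3 => exact h2

theorem le_atom' {G H : Game A} (h : Le G H) : (G.IsAtom ∨ H.IsAtom) → Tri G H := by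
  cases h with | mk h1 h2 h3 => exact h3

/-- Monotonicity of atoms on the left. -/
theorem atom_mono (Z : Game A) :
    (∀ b c : A, b ≤ c → Tri (atom c) Z → Tri (atom b) Z) ∧
    (∀ b c : A, b ≤ c → Le (atom c) Z → Le (atom b) Z) := by
  induction Z using optRec with
  | ih Z ih =>
    have triP : ∀ b c : A, b ≤ c → Tri (atom c) Z → Tri (atom b) Z := by
      intro b c hbc ht
      cases ht with
      | ofRight hopt hle => exact hopt.elim
      | ofLeft hopt hle => exact Tri.ofLeft hopt ((ih _ (Or.inl hopt)).2 b c hbc hle)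
      | ofAtom hcd => exact Tri.ofAtom (le_trans hbc hcd)
    refine ⟨triP, ?_⟩
    intro b c hbc hle
    exact Le.mk (fun x hx => hx.elim)
      (fun y hy => (ih y (Or.inr hy)).1 b c hbc (le_right' hle y hy))
      (fun _ => triP b c hbc (le_atom' hle (Or.inl True.intro)))

/-- The conjunction of the three transitivity statements. -/
def TStmt (X Y Z : Game A) : Prop :=
  (Le X Y → Tri Y Z → Tri X Z) ∧
  (Tri X Y → Le Y Z → Tri X Z) ∧
  (Le X Y → Le Y Z → Le X Z)

theorem trans_node (X Y Z : Game A)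
    (ihX : ∀ x, IsOption X x → TStmt x Y Z)
    (ihY : ∀ y, IsOption Y y → ∀ X', TStmt X' y Z)
    (ihZ : ∀ z, IsOption Z z → ∀ Y' X', TStmt X' Y' z) :
    TStmt X Y Z := by
  have p2 : Tri X Y → Le Y Z → Tri X Z := by
    intro ht hYZ
    cases ht with
    | ofRight hopt hle => exact Tri.ofRight hopt ((ihX _ (Or.inr hopt)).2.2 hle hYZ)
    | ofLeft hopt hle => exact (ihY _ (Or.inl hopt) X).1 hle (le_left' hYZ _ hopt)
    | ofAtom hbc => exact (atom_mono Z).1 _ _ hbc (le_atom' hYZ (Or.inl True.intro))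
  have p1 : Le X Y → Tri Y Z → Tri X Z := by
    intro hXY ht
    cases ht with
    | ofRight hopt hle => exact (ihY _ (Or.inr hopt) X).2.1 (le_right' hXY _ hopt) hle
    | ofLeft hopt hle => exact Tri.ofLeft hopt ((ihZ _ (Or.inl hopt) Y X).2.2 hXY hle)
    | ofAtom hbc =>
        exact p2 (le_atom' hXY (Or.inr True.intro))
          (Le.mk (fun x hx => hx.elim) (fun y hy => hy.elim) (fun _ => Tri.ofAtom hbc))
  have p3 : Le X Y → Le Y Z → Le X Z := by
    intro hXY hYZ
    refine Le.mk ?_ ?_ ?_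
    · intro x hx
      exact (ihX x (Or.inl hx)).2.1 (le_left' hXY x hx) hYZ
    · intro z hz
      exact (ihZ z (Or.inr hz) Y X).1 hXY (le_right' hYZ z hz)
    · intro hat
      cases hat with
      | inl hX => exact p2 (le_atom' hXY (Or.inl hX)) hYZ
      | inr hZ => exact p1 hXY (le_atom' hYZ (Or.inr hZ))
  exact ⟨p1, p2, p3⟩

theorem tstmt_all : ∀ Z Y X : Game A, TStmt X Y Z :=
  optRec (C := fun Z => ∀ Y X, TStmt X Y Z) (fun Z ihZ =>
    optRec (C := fun Y => ∀ X, TStmt X Y Z) (fun Y ihY =>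
      optRec (C := fun X => TStmt X Y Z) (fun X ihX =>
        trans_node X Y Z ihX (fun y hy X' => ihY y hy X')
          (fun z hz Y' X' => ihZ z hz Y' X'))))

theorem le_trans' {X Y Z : Game A} (h1 : Le X Y) (h2 : Le Y Z) : Le X Z :=
  (tstmt_all Z Y X).2.2 h1 h2

theorem le_tri_trans {X Y Z : Game A} (h1 : Le X Y) (h2 : Tri Y Z) : Tri X Z :=
  (tstmt_all Z Y X).1 h1 h2

theorem passable_tri {X : Game A} (h : Passable X) : Tri X X := by
  cases h with | mk t pl pr => exact t

theorem passable_left {X x : Game A} (h : Passable X) (hx : X.IsLeftOption x) :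
    Passable x := by
  cases h with | mk t pl pr => exact pl x hx

theorem passable_right {X y : Game A} (h : Passable X) (hy : X.IsRightOption y) :
    Passable y := by
  cases h with | mk t pl pr => exact pr y hy

/-- Key lemma: if `X` is passable and `X ≤ G` where `G` is the given composite
game all of whose left options are `≤ [a]`, then `X ≤ [a]`. -/
theorem claimA {ι κ : Type} {L : ι → Game A} {R : κ → Game A}
    {hι : Nonempty ι} {hκ : Nonempty κ} {a : A}
    (h : ∀ i, Le (L i) (atom a)) :
    ∀ X : Game A, Passable X → Le X (comp ι κ L R hι hκ) → Le X (atom a) := by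
  intro X
  induction X using optRecT with
  | ih X ih =>
    intro hpX hXG
    have clause1 : ∀ x, X.IsLeftOption x → Tri x (atom a) := by
      intro x hx
      have htxG : Tri x (comp ι κ L R hι hκ) := le_left' hXG x hx
      cases htxG with
      | ofRight hopt hle =>
          have hx' : Relation.TransGen (fun x G : Game A => IsOption G x) x X :=
            Relation.TransGen.single (Or.inl hx)
          have hr : (fun x G : Game A => IsOption G x) _ x := Or.inr hopt
          have hw := Relation.TransGen.head (r := fun x G : Game A => IsOption G x) hr hx'
          have hpw := passable_right (passable_left hpX hx) hopt
          exact Tri.ofRight hopt (ih _ hw hpw hle)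
      | ofLeft hopt hle =>
          obtain ⟨i, rfl⟩ := hopt
          exact le_atom' (le_trans' hle (h i)) (Or.inr True.intro)
    refine Le.mk clause1 (fun y hy => hy.elim) ?_
    intro _
    cases passable_tri hpX with
    | ofRight hopt hle =>
        have hwG := le_trans' hle hXG
        exact Tri.ofRight hopt
          (ih _ (Relation.TransGen.single (Or.inr hopt)) (passable_right hpX hopt) hwG)
    | ofLeft hopt hle =>
        have htx : Tri _ (comp ι κ L R hι hκ) := le_left' hXG _ hopt
        cases htx with
        | ofRight hopt2 hle2 =>
            have hx' : Relation.TransGen (fun x G : Game A => IsOption G x) _ X :=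
              Relation.TransGen.single (Or.inl hopt)
            have hr : (fun x G : Game A => IsOption G x) _ _ := Or.inr hopt2
            have hw := Relation.TransGen.head (r := fun x G : Game A => IsOption G x) hr hx'
            have hpw := passable_right (passable_left hpX hopt) hopt2
            have hwa := ih _ hw hpw hle2
            exact le_tri_trans hle (Tri.ofRight hopt2 hwa)
        | ofLeft hopt2 hle2 =>
            obtain ⟨i, rfl⟩ := hopt2
            exact le_atom' (le_trans' hle (le_trans' hle2 (h i))) (Or.inr True.intro)
    | ofAtom hbb =>
        have htG : Tri _ (comp ι κ L R hι hκ) := le_atom' hXG (Or.inl True.intro)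
        cases htG with
        | ofRight hopt hle => exact hopt.elim
        | ofLeft hopt hle =>
            obtain ⟨i, rfl⟩ := hopt
            exact le_atom' (le_trans' hle (h i)) (Or.inr True.intro)

end Ord

end Game

/-- If `G` is a passable composite game and every left option `G^L` satisfies
`G^L ≤ [a]`, then `G ≤ [a]`. -/
theorem Game.passable_le_atom {A : Type} [PartialOrder A]
    (ι κ : Type) (L : ι → Game A) (R : κ → Game A)
    (hι : Nonempty ι) (hκ : Nonempty κ) (a : A)
    (hp : Game.Passable (Game.comp ι κ L R hι hκ))
    (h : ∀ i, Game.Le (L i) (Game.atom a)) :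
    Game.Le (Game.comp ι κ L R hι hκ) (Game.atom a) := by
  refine Game.Le.mk ?_ (fun y hy => hy.elim) ?_
  · intro x hx
    obtain ⟨i, rfl⟩ := hx
    exact Game.le_atom' (h i) (Or.inr True.intro)
  · intro _
    cases Game.passable_tri hp with
    | ofRight hopt hle =>
        exact Game.Tri.ofRight hopt
          (Game.claimA h _ (Game.passable_right hp hopt) hle)
    | ofLeft hopt hle =>
        obtain ⟨i, rfl⟩ := hopt
        exact Game.le_atom' (Game.le_trans' hle (h i)) (Or.inr True.intro)
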